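/- Let f : X → ℝ be locally Lipschitz continuous, let h_k → h in X, and let A_k, A ⊂ X be nonempty with A compact, A_k → A in the Hausdorff metric, and A ⊂ A_k for all k ∈ ℕ. Then lim_{k→∞} f⁰(A_k;h_k) = f⁰(A;h), and moreover the set of weak* limits of sequences a_k ∈ ∂f(A_k) equals ∂f(A). -/

import Mathlib

open Filter Metric Set NormedSpace
open scoped NNReal

variable {X : Type*} [NormedAddCommGroup X] [NormedSpace ℝ X]

/-- Clarke's generalized directional derivative
`f⁰(x;h) = limsup_{y→x, t↓0⁺} (f(y+th) − f(y))/t`. -/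
noncomputable def clarkeDeriv (f : X → ℝ) (x : X) (h : X) : ℝ :=
  Filter.limsup (fun p : X × ℝ => (f (p.1 + p.2 • h) - f p.1) / p.2)
    ((nhds x) ×ˢ (nhdsWithin 0 (Set.Ioi 0)))

/-- Clarke's generalized gradient `∂f(x) = {a ∈ X* : ⟨a,h⟩ ≤ f⁰(x;h) ∀ h}`. -/
def clarkeGrad (f : X → ℝ) (x : X) : Set (StrongDual ℝ X) :=
  {a | ∀ h : X, a h ≤ clarkeDeriv f x h}

/-- Directional derivative of `f` on the set `A`: `f⁰(A;h) = sup_{y∈A} f⁰(y;h)`. -/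
noncomputable def setDeriv (f : X → ℝ) (A : Set X) (h : X) : ℝ :=
  sSup ((fun y => clarkeDeriv f y h) '' A)

/-- Gradient of `f` on the set `A`: the weak*-closed convex hull of `⋃_{y∈A} ∂f(y)`. -/
def setGrad (f : X → ℝ) (A : Set X) : Set (StrongDual ℝ X) :=
  {a | StrongDual.toWeakDual a ∈
    closure ((StrongDual.toWeakDual (𝕜 := ℝ) (E := X)) '' (convexHull ℝ (⋃ y ∈ A, clarkeGrad f y)))}

/-!
For `f` Lipschitz near `x`, the function `f⁰(x;·)` is sublinear and Lipschitz, so by Hahn–Banach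
it is the support function of `∂f(x)`; weak* separation then shows that `a ∈ ∂f(A)` iff `a v ≤ c`
whenever `f⁰(y;v) ≤ c` for all `y ∈ A`. The map `(x, h) ↦ f⁰(x;h)` is upper semicontinuous, so by
compactness of `A` a strict bound `f⁰(·;h) < c` on `A` persists on `A_k` in directions near `h`
for large `k`. This gives the upper bound on `f⁰(A_k;h_k)` and, applied to every half-space test
`(v, c)`, puts weak* limits of `a_k ∈ ∂f(A_k)` into `∂f(A)`. The lower bound and the reverse
inclusion come from `A ⊆ A_k` and the continuity of `f⁰(y;·)`.
-/

open Topology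

theorem exists_linearMap_le_sublinear_apply_eq {E : Type*} [AddCommGroup E] [Module ℝ E]
    (N : E → ℝ) (N_hom : ∀ c : ℝ, 0 < c → ∀ x, N (c • x) = c * N x)
    (N_add : ∀ x y, N (x + y) ≤ N x + N y) (v : E) :
    ∃ g : E →ₗ[ℝ] ℝ, (∀ x, g x ≤ N x) ∧ g v = N v := by
  have N_zero : N 0 = 0 := by
    have := N_hom 2 two_pos 0
    rw [smul_zero] at this
    linarith
  have H : ∀ c : ℝ, c • v = 0 → RingHom.id ℝ c • N v = 0 := by
    intro c hc
    rcases smul_eq_zero.1 hc with rfl | rfl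
    · simp
    · simp [N_zero]
  set g₀ := LinearPMap.mkSpanSingleton' v (N v) H
  have hdom : g₀.domain = ℝ ∙ v := LinearPMap.domain_mkSpanSingleton v (N v) H
  have hg₀ : ∀ z : g₀.domain, g₀ z ≤ N z := by
    rintro ⟨_, hz⟩
    obtain ⟨c, rfl⟩ := Submodule.mem_span_singleton.1 (hdom ▸ hz)
    rw [LinearPMap.mkSpanSingleton'_apply, RingHom.id_apply, smul_eq_mul]
    rcases lt_trichotomy c 0 with hc | rfl | hc
    · have hneg : N (c • v) = -c * N (-v) := by rw [← N_hom (-c) (neg_pos.2 hc), neg_smul_neg]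
      have hsum := N_add v (-v)
      rw [add_neg_cancel, N_zero] at hsum
      nlinarith
    · simp [N_zero]
    · exact (N_hom c hc v).ge
  obtain ⟨g, hgg₀, hgN⟩ := exists_extension_of_le_sublinear g₀ N N_hom N_add hg₀
  have hv : v ∈ g₀.domain := hdom ▸ Submodule.mem_span_singleton_self v
  exact ⟨g, hgN, (hgg₀ ⟨v, hv⟩).trans (LinearPMap.mkSpanSingleton'_apply_self v (N v) H hv)⟩

theorem WeakDual.mem_closure_convexHull_iff {E : Type*} [AddCommGroup E] [TopologicalSpace E]
    [Module ℝ E] {S : Set (WeakDual ℝ E)} {a : WeakDual ℝ E} :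
    a ∈ closure (convexHull ℝ S) ↔ ∀ (v : E) (c : ℝ), (∀ b ∈ S, b v ≤ c) → a v ≤ c := by
  have : LocallyConvexSpace ℝ (WeakDual ℝ E) := WeakBilin.locallyConvexSpace
  constructor
  · intro ha v c hS
    have hconvex : Convex ℝ {b : WeakDual ℝ E | b v ≤ c} :=
      convex_halfSpace_le ⟨fun _ _ => rfl, fun _ _ => rfl⟩ c
    exact closure_minimal (convexHull_min hS hconvex)
      (isClosed_le (WeakDual.eval_continuous v) continuous_const) ha
  · intro H
    by_contra ha
    obtain ⟨φ, u, hau, huS⟩ :=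
      geometric_hahn_banach_point_closed (convex_convexHull ℝ S).closure isClosed_closure ha
    obtain ⟨v, rfl⟩ := LinearMap.dualEmbedding_surjective (topDualPairing ℝ E) φ
    have hS : ∀ b ∈ S, b (-v) ≤ -u := fun b hb => by
      have : u < b v := huS b (subset_closure (subset_convexHull ℝ S hb))
      rw [map_neg]
      linarith
    have hav : a v < u := hau
    have := H (-v) (-u) hS
    rw [map_neg] at this
    linarith

/-- `clarkeDeriv f x h` is definitionally `limsup (clarkeQuot f h) (clarkeFilter x)`. -/
def clarkeFilter (x : X) : Filter (X × ℝ) := 𝓝 x ×ˢ 𝓝[>] 0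

noncomputable def clarkeQuot (f : X → ℝ) (h : X) (p : X × ℝ) : ℝ := (f (p.1 + p.2 • h) - f p.1) / p.2

instance (x : X) : (clarkeFilter x).NeBot := by
  unfold clarkeFilter
  infer_instance

omit [NormedSpace ℝ X] in
theorem eventually_pos_clarkeFilter (x : X) : ∀ᶠ p in clarkeFilter x, 0 < p.2 :=
  tendsto_snd.eventually self_mem_nhdsWithin

theorem tendsto_add_smul_clarkeFilter (x h : X) :
    Tendsto (fun p : X × ℝ => p.1 + p.2 • h) (clarkeFilter x) (𝓝 x) := by
  have hle : clarkeFilter x ≤ 𝓝 (x, 0) := by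
    rw [nhds_prod_eq]
    exact prod_mono le_rfl nhdsWithin_le_nhds
  have hcont : Continuous fun p : X × ℝ => p.1 + p.2 • h := by fun_prop
  simpa using (hcont.tendsto (x, 0)).mono_left hle

theorem tendsto_clarkeFilter_shift (x h : X) :
    Tendsto (fun p : X × ℝ => (p.1 + p.2 • h, p.2)) (clarkeFilter x) (clarkeFilter x) :=
  (tendsto_add_smul_clarkeFilter x h).prodMk tendsto_snd

omit [NormedSpace ℝ X] in
theorem tendsto_clarkeFilter_scale (x : X) {c : ℝ} (hc : 0 < c) :
    Tendsto (fun p : X × ℝ => (p.1, c * p.2)) (clarkeFilter x) (clarkeFilter x) := by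
  refine tendsto_fst.prodMk (tendsto_nhdsWithin_of_tendsto_nhds_of_eventually_within _ ?_ ?_)
  · have : Tendsto (fun p : X × ℝ => p.2) (𝓝 x ×ˢ 𝓝[>] 0) (𝓝 0) :=
      tendsto_snd.mono_right nhdsWithin_le_nhds
    simpa using this.const_mul c
  · exact (eventually_pos_clarkeFilter x).mono fun p hp => mul_pos hc hp

section LipschitzNear

variable {f : X → ℝ} {K : ℝ≥0} {s : Set X} {x : X}

theorem eventually_abs_clarkeQuot_le (hl : LipschitzOnWith K f s) (hs : s ∈ 𝓝 x) (h : X) :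
    ∀ᶠ p in clarkeFilter x, |clarkeQuot f h p| ≤ K * ‖h‖ := by
  filter_upwards [tendsto_fst.eventually_mem hs,
    (tendsto_add_smul_clarkeFilter x h).eventually_mem hs, eventually_pos_clarkeFilter x]
    with p hy hyt ht
  rw [clarkeQuot, abs_div, abs_of_pos ht, div_le_iff₀ ht]
  calc |f (p.1 + p.2 • h) - f p.1| ≤ K * dist (p.1 + p.2 • h) p.1 := by
        simpa only [Real.dist_eq] using hl.dist_le_mul _ hyt _ hy
    _ = K * ‖h‖ * p.2 := by
        rw [dist_eq_norm, add_sub_cancel_left, norm_smul, Real.norm_of_nonneg ht.le]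
        ring

theorem clarkeDeriv_le_of_eventually_le (hl : LipschitzOnWith K f s) (hs : s ∈ 𝓝 x) {h : X}
    {c : ℝ} (H : ∀ᶠ p in clarkeFilter x, clarkeQuot f h p ≤ c) : clarkeDeriv f x h ≤ c :=
  limsup_le_of_le (isCoboundedUnder_le_of_eventually_le _
    ((eventually_abs_clarkeQuot_le hl hs h).mono fun _ hp => (abs_le.1 hp).1)) H

theorem eventually_clarkeQuot_lt (hl : LipschitzOnWith K f s) (hs : s ∈ 𝓝 x) {h : X} {c : ℝ}
    (hc : clarkeDeriv f x h < c) : ∀ᶠ p in clarkeFilter x, clarkeQuot f h p < c :=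
  eventually_lt_of_limsup_lt hc (isBoundedUnder_of_eventually_le
    ((eventually_abs_clarkeQuot_le hl hs h).mono fun _ hp => (abs_le.1 hp).2))

theorem clarkeDeriv_le_mul_norm (hl : LipschitzOnWith K f s) (hs : s ∈ 𝓝 x) (h : X) :
    clarkeDeriv f x h ≤ K * ‖h‖ :=
  clarkeDeriv_le_of_eventually_le hl hs
    ((eventually_abs_clarkeQuot_le hl hs h).mono fun _ hp => (abs_le.1 hp).2)

theorem clarkeDeriv_add_le (hl : LipschitzOnWith K f s) (hs : s ∈ 𝓝 x) (h h' : X) :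
    clarkeDeriv f x (h + h') ≤ clarkeDeriv f x h + clarkeDeriv f x h' := by
  refine le_of_forall_pos_le_add fun ε hε => clarkeDeriv_le_of_eventually_le hl hs ?_
  filter_upwards [(tendsto_clarkeFilter_shift x h').eventually
      (eventually_clarkeQuot_lt hl hs (lt_add_of_pos_right (clarkeDeriv f x h) (half_pos hε))),
    eventually_clarkeQuot_lt hl hs (lt_add_of_pos_right (clarkeDeriv f x h') (half_pos hε))]
    with p h₁ h₂
  have hsplit : clarkeQuot f (h + h') p =
      clarkeQuot f h (p.1 + p.2 • h', p.2) + clarkeQuot f h' p := by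
    simp only [clarkeQuot]
    rw [← add_div, smul_add, ← add_assoc, add_right_comm p.1 (p.2 • h), sub_add_sub_cancel]
  linarith

theorem clarkeDeriv_smul_le (hl : LipschitzOnWith K f s) (hs : s ∈ 𝓝 x) (h : X) {c : ℝ}
    (hc : 0 < c) : clarkeDeriv f x (c • h) ≤ c * clarkeDeriv f x h := by
  refine le_of_forall_pos_le_add fun ε hε => clarkeDeriv_le_of_eventually_le hl hs ?_
  filter_upwards [(tendsto_clarkeFilter_scale x hc).eventually
    (eventually_clarkeQuot_lt hl hs (lt_add_of_pos_right (clarkeDeriv f x h) (div_pos hε hc)))]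
    with p hp
  have hscale : clarkeQuot f (c • h) p = c * clarkeQuot f h (p.1, c * p.2) := by
    rw [clarkeQuot, clarkeQuot, smul_smul, mul_comm p.2 c, ← mul_div_assoc,
      mul_div_mul_left _ _ hc.ne']
  calc clarkeQuot f (c • h) p = c * clarkeQuot f h (p.1, c * p.2) := hscale
    _ ≤ c * (clarkeDeriv f x h + ε / c) := mul_le_mul_of_nonneg_left hp.le hc.le
    _ = c * clarkeDeriv f x h + ε := by field_simp

theorem clarkeDeriv_smul (hl : LipschitzOnWith K f s) (hs : s ∈ 𝓝 x) (h : X) {c : ℝ}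
    (hc : 0 < c) : clarkeDeriv f x (c • h) = c * clarkeDeriv f x h := by
  refine le_antisymm (clarkeDeriv_smul_le hl hs h hc) ?_
  have := clarkeDeriv_smul_le hl hs (c • h) (inv_pos.2 hc)
  rw [inv_smul_smul₀ hc.ne'] at this
  calc c * clarkeDeriv f x h ≤ c * (c⁻¹ * clarkeDeriv f x (c • h)) :=
        mul_le_mul_of_nonneg_left this hc.le
    _ = clarkeDeriv f x (c • h) := by field_simp

theorem clarkeDeriv_le_add_mul_norm_sub (hl : LipschitzOnWith K f s) (hs : s ∈ 𝓝 x)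
    (h h' : X) : clarkeDeriv f x h ≤ clarkeDeriv f x h' + K * ‖h - h'‖ :=
  calc clarkeDeriv f x h = clarkeDeriv f x (h' + (h - h')) := by rw [add_sub_cancel]
    _ ≤ clarkeDeriv f x h' + clarkeDeriv f x (h - h') := clarkeDeriv_add_le hl hs _ _
    _ ≤ clarkeDeriv f x h' + K * ‖h - h'‖ := by
        gcongr
        exact clarkeDeriv_le_mul_norm hl hs _

theorem lipschitzWith_clarkeDeriv (hl : LipschitzOnWith K f s) (hs : s ∈ 𝓝 x) :
    LipschitzWith K (clarkeDeriv f x) :=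
  .of_le_add_mul K fun h h' => by
    simpa only [dist_eq_norm] using clarkeDeriv_le_add_mul_norm_sub hl hs h h'

theorem exists_mem_clarkeGrad_apply_eq (hl : LipschitzOnWith K f s) (hs : s ∈ 𝓝 x) (h : X) :
    ∃ a ∈ clarkeGrad f x, a h = clarkeDeriv f x h := by
  obtain ⟨g, hg, hgh⟩ := exists_linearMap_le_sublinear_apply_eq (clarkeDeriv f x)
    (fun c hc v => clarkeDeriv_smul hl hs v hc) (clarkeDeriv_add_le hl hs) h
  have hbound : ∀ v, ‖g v‖ ≤ K * ‖v‖ := by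
    intro v
    have hneg := (hg (-v)).trans (clarkeDeriv_le_mul_norm hl hs (-v))
    rw [map_neg, norm_neg] at hneg
    rw [Real.norm_eq_abs, abs_le]
    exact ⟨by linarith, (hg v).trans (clarkeDeriv_le_mul_norm hl hs v)⟩
  exact ⟨g.mkContinuous K hbound, hg, hgh⟩

end LipschitzNear

section LocallyLipschitz

variable {f : X → ℝ}

theorem LocallyLipschitz.upperSemicontinuous_clarkeDeriv (hf : LocallyLipschitz f) :
    UpperSemicontinuous fun p : X × X => clarkeDeriv f p.1 p.2 := by
  rintro ⟨x, h⟩ c hc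
  obtain ⟨K, s, hs, hl⟩ := hf x
  obtain ⟨c', hc', hc'c⟩ := exists_between hc
  obtain ⟨u, hu, v, hv, huv⟩ := mem_prod_iff.1 (eventually_clarkeQuot_lt hl hs hc')
  have hdir : ∀ᶠ g in 𝓝 h, K * ‖g - h‖ < c - c' := by
    have : Tendsto (fun g => K * ‖g - h‖) (𝓝 h) (𝓝 (K * ‖h - h‖)) :=
      (continuous_const.mul (continuous_id.sub continuous_const).norm).tendsto h
    rw [sub_self, norm_zero, mul_zero] at this
    exact this.eventually (gt_mem_nhds (sub_pos.2 hc'c))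
  rw [nhds_prod_eq]
  filter_upwards [((eventually_mem_nhds_iff.2 hs).and (eventually_mem_nhds_iff.2 hu)).prod_mk hdir]
    with ⟨x', g⟩ ⟨⟨hsx', hux'⟩, hg⟩
  have hx' : clarkeDeriv f x' h ≤ c' :=
    clarkeDeriv_le_of_eventually_le hl hsx' <|
      (show ∀ᶠ p in clarkeFilter x', clarkeQuot f h p < c' from
        mem_of_superset (prod_mem_prod hux' hv) huv).mono fun _ hp => hp.le
  calc clarkeDeriv f x' g ≤ clarkeDeriv f x' h + K * ‖g - h‖ :=
        clarkeDeriv_le_add_mul_norm_sub hl hsx' g h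
    _ < c := by linarith

theorem setGrad_mono {A B : Set X} (hAB : A ⊆ B) : setGrad f A ⊆ setGrad f B := fun _ ha =>
  closure_mono (X := WeakDual ℝ X)
    (image_mono (convexHull_mono (biUnion_subset_biUnion_left hAB))) ha

theorem mem_setGrad_iff (hf : LocallyLipschitz f) {A : Set X} {a : StrongDual ℝ X} :
    a ∈ setGrad f A ↔ ∀ (v : X) (c : ℝ), (∀ y ∈ A, clarkeDeriv f y v ≤ c) → a v ≤ c := by
  have himage := (StrongDual.toWeakDual (𝕜 := ℝ) (E := X)).toLinearMap.image_convexHull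
    (⋃ y ∈ A, clarkeGrad f y)
  rw [LinearEquiv.coe_coe] at himage
  change StrongDual.toWeakDual a ∈ closure _ ↔ _
  rw [himage, WeakDual.mem_closure_convexHull_iff]
  refine forall₂_congr fun v c => imp_congr_left ⟨fun H y hy => ?_, fun H b hb => ?_⟩
  · obtain ⟨K, s, hs, hl⟩ := hf y
    obtain ⟨b, hb, hbv⟩ := exists_mem_clarkeGrad_apply_eq hl hs v
    exact hbv ▸ H _ (mem_image_of_mem _ (mem_biUnion hy hb))
  · obtain ⟨b, hb, rfl⟩ := hb
    obtain ⟨y, hy, hby⟩ := mem_iUnion₂.1 hb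
    exact (hby v).trans (H y hy)

variable {ι : Type*} {l : Filter ι} {A : ι → Set X} {A₀ : Set X}

theorem eventually_forall_clarkeDeriv_lt (hf : LocallyLipschitz f) (hA₀ : IsCompact A₀)
    (hA : ∀ ε > 0, ∀ᶠ k in l, A k ⊆ thickening ε A₀) {h : ι → X} {h₀ : X}
    (hh : Tendsto h l (𝓝 h₀)) {c : ℝ} (hc : ∀ y ∈ A₀, clarkeDeriv f y h₀ < c) :
    ∀ᶠ k in l, ∀ x ∈ A k, clarkeDeriv f x (h k) < c := by
  have hopen : IsOpen {p : X × X | clarkeDeriv f p.1 p.2 < c} :=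
    hf.upperSemicontinuous_clarkeDeriv.isOpen_preimage c
  have hA₀h₀ : A₀ ×ˢ {h₀} ⊆ {p : X × X | clarkeDeriv f p.1 p.2 < c} := by
    rintro ⟨y, g⟩ ⟨hy, rfl⟩
    exact hc y hy
  obtain ⟨u, v, hu, hv, hA₀u, hh₀v, huv⟩ :=
    generalized_tube_lemma hA₀ isCompact_singleton hopen hA₀h₀
  obtain ⟨δ, hδ, hδu⟩ := hA₀.exists_thickening_subset_open hu hA₀u
  filter_upwards [hA δ hδ, hh (hv.mem_nhds (hh₀v rfl))] with k hk hkv x hx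
  exact (huv (mk_mem_prod (hδu (hk hx)) hkv) :)

theorem tendsto_setDeriv (hf : LocallyLipschitz f) (hA₀ : IsCompact A₀) (hne : A₀.Nonempty)
    (hsub : ∀ k, A₀ ⊆ A k) (hA : ∀ ε > 0, ∀ᶠ k in l, A k ⊆ thickening ε A₀) {h : ι → X}
    {h₀ : X} (hh : Tendsto h l (𝓝 h₀)) :
    Tendsto (fun k => setDeriv f (A k) (h k)) l (𝓝 (setDeriv f A₀ h₀)) := by
  have hbdd : BddAbove ((clarkeDeriv f · h₀) '' A₀) :=
    ((hf.upperSemicontinuous_clarkeDeriv.comp (continuous_id.prodMk continuous_const)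
      ).upperSemicontinuousOn A₀).bddAbove_of_isCompact hA₀
  have hle : ∀ y ∈ A₀, clarkeDeriv f y h₀ ≤ setDeriv f A₀ h₀ := fun y hy =>
    le_csSup hbdd (mem_image_of_mem _ hy)
  refine tendsto_order.2 ⟨fun c hc => ?_, fun c hc => ?_⟩
  · obtain ⟨_, ⟨y, hy, rfl⟩, hcy⟩ := exists_lt_of_lt_csSup (hne.image _) hc
    obtain ⟨K, s, hs, hl⟩ := hf y
    have hcont : Tendsto (fun k => clarkeDeriv f y (h k)) l (𝓝 (clarkeDeriv f y h₀)) :=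
      ((lipschitzWith_clarkeDeriv hl hs).continuous.tendsto h₀).comp hh
    filter_upwards [hcont.eventually_const_lt hcy, eventually_forall_clarkeDeriv_lt hf hA₀ hA hh
      fun z hz => (hle z hz).trans_lt (lt_add_one _)] with k hk hbddk
    exact hk.trans_le <| le_csSup ⟨_, forall_mem_image.2 fun x hx => (hbddk x hx).le⟩
      (mem_image_of_mem _ (hsub k hy))
  · obtain ⟨c', hc', hc'c⟩ := exists_between hc
    filter_upwards [eventually_forall_clarkeDeriv_lt hf hA₀ hA hh fun y hy =>
      (hle y hy).trans_lt hc'] with k hk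
    exact (csSup_le ((hne.mono (hsub k)).image _) (forall_mem_image.2 fun x hx =>
      (hk x hx).le)).trans_lt hc'c

theorem mem_setGrad_of_tendsto [l.NeBot] (hf : LocallyLipschitz f) (hA₀ : IsCompact A₀)
    (hA : ∀ ε > 0, ∀ᶠ k in l, A k ⊆ thickening ε A₀) {a : ι → StrongDual ℝ X}
    (ha : ∀ k, a k ∈ setGrad f (A k)) {a₀ : StrongDual ℝ X}
    (hlim : Tendsto (fun k => StrongDual.toWeakDual (a k)) l (𝓝 (StrongDual.toWeakDual a₀))) :
    a₀ ∈ setGrad f A₀ := by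
  refine (mem_setGrad_iff hf).2 fun v c hc => le_of_forall_gt_imp_ge_of_dense fun c' hc' => ?_
  have hv : Tendsto (fun k => a k v) l (𝓝 (a₀ v)) :=
    tendsto_iff_forall_eval_tendsto_topDualPairing.1 hlim v
  refine le_of_tendsto hv ?_
  filter_upwards [eventually_forall_clarkeDeriv_lt hf hA₀ hA tendsto_const_nhds fun y hy =>
    (hc y hy).trans_lt hc'] with k hk
  exact (mem_setGrad_iff hf).1 (ha k) v c' fun x hx => (hk x hx).le

end LocallyLipschitz

theorem setDeriv_tendsto_and_weakStar_limits_eq_of_subset_general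
    (f : X → ℝ) (hf : LocallyLipschitz f)
    (h : ℕ → X) (h₀ : X) (hh : Tendsto h atTop (nhds h₀))
    (A : ℕ → Set X) (A₀ : Set X) (hA₀ : A₀.Nonempty)
    (hcomp : IsCompact A₀)
    (hconv : ∀ ε : ℝ, 0 < ε → ∀ᶠ k in atTop,
      A₀ ⊆ Metric.thickening ε (A k) ∧ A k ⊆ Metric.thickening ε A₀)
    (hsub : ∀ k, A₀ ⊆ A k) :
    Tendsto (fun k => setDeriv f (A k) (h k)) atTop (nhds (setDeriv f A₀ h₀)) ∧
    {a₀ : StrongDual ℝ X | ∃ a : ℕ → StrongDual ℝ X, (∀ k, a k ∈ setGrad f (A k)) ∧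
        Tendsto (fun k => StrongDual.toWeakDual (a k)) atTop (nhds (StrongDual.toWeakDual a₀))} =
      setGrad f A₀ := by
  have hA : ∀ ε > 0, ∀ᶠ k in atTop, A k ⊆ thickening ε A₀ := fun ε hε =>
    (hconv ε hε).mono fun _ hk => hk.2
  refine ⟨tendsto_setDeriv hf hcomp hA₀ hsub hA hh, Set.ext fun a₀ => ⟨?_, fun ha₀ => ?_⟩⟩
  · rintro ⟨a, ha, hlim⟩
    exact mem_setGrad_of_tendsto hf hcomp hA ha hlim
  · exact ⟨fun _ => a₀, fun k => setGrad_mono (hsub k) ha₀, tendsto_const_nhds⟩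

/-- Proposition 2.2, final part: if moreover `A ⊆ A_k` for all `k`, then
`lim_k f⁰(A_k;h_k) = f⁰(A;h)` and the set of weak* limits of sequences
`a_k ∈ ∂f(A_k)` equals `∂f(A)`. -/
theorem setDeriv_tendsto_and_weakStar_limits_eq_of_subset
    [CompleteSpace X] (f : X → ℝ) (hf : LocallyLipschitz f)
    (h : ℕ → X) (h₀ : X) (hh : Tendsto h atTop (nhds h₀))
    (A : ℕ → Set X) (A₀ : Set X) (hne : ∀ k, (A k).Nonempty) (hA₀ : A₀.Nonempty)
    (hcomp : IsCompact A₀)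
    (hconv : ∀ ε : ℝ, 0 < ε → ∀ᶠ k in atTop,
      A₀ ⊆ Metric.thickening ε (A k) ∧ A k ⊆ Metric.thickening ε A₀)
    (hsub : ∀ k, A₀ ⊆ A k) :
    Tendsto (fun k => setDeriv f (A k) (h k)) atTop (nhds (setDeriv f A₀ h₀)) ∧
    {a₀ : StrongDual ℝ X | ∃ a : ℕ → StrongDual ℝ X, (∀ k, a k ∈ setGrad f (A k)) ∧
        Tendsto (fun k => StrongDual.toWeakDual (a k)) atTop (nhds (StrongDual.toWeakDual a₀))} =
      setGrad f A₀ :=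
  setDeriv_tendsto_and_weakStar_limits_eq_of_subset_general f hf h h₀ hh A A₀ hA₀ hcomp hconv hsub
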